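/- Let d ≥ 3 and let z_1, …, z_d ∈ ℤ^d be a basis of ℤ^d such that z̲_2, …, z̲_d are linearly independent in ℝ^{d−1}, |z̲_1| ≤ |z̲_2| ≤ |z̲_3| with z̲_1 ≠ 0, and ⟨z̲_1, z̲_2⟩ ≤ 0. If d ≥ 4, assume moreover that det Λ̲_{1,n} > |z̲_2| · det Λ̲_{1,n−1} for n = 3, …, d−1. Suppose α ∈ 𝔖_2 satisfies ⟨α, z_2⟩ · ⟨α_2, z_1⟩ ≥ 0. Then for every z ∈ Λ_{1,d−1} with |z̲| ≤ |z̲_2|, z ≠ 0, z ≠ ±z_2, which is not an integer multiple of z_1, we have |L_α(z)| · |z̲|^{d−1} ≥ (D_{1,2}^{d−1} / (D_{2,d−1} B_1^{d−1})) · (1 − 1/(2 B_1 B_2)). -/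

import Mathlib

open scoped InnerProductSpace

noncomputable section

/-- `ℝ^n` with the Euclidean structure. -/
abbrev E (n : ℕ) : Type := EuclideanSpace ℝ (Fin n)

/-- The projection `x ↦ x̲` forgetting the last coordinate. -/
def pr (d : ℕ) (x : E d) : E (d - 1) :=
  WithLp.toLp 2 (fun i : Fin (d - 1) => x (Fin.castLE (Nat.sub_le d 1) i))

/-- The canonical embedding of `ℤ^d` into `ℝ^d`. -/
def toE (d : ℕ) (z : Fin d → ℤ) : E d := WithLp.toLp 2 (fun i => (z i : ℝ))

/-- The `m`-dimensional volume of the parallelepiped spanned by `v 0, …, v (m-1)`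
(square root of the Gram determinant). -/
def gramVol {n m : ℕ} (v : Fin m → E n) : ℝ :=
  Real.sqrt ((Matrix.of (fun i j : Fin m => ⟪v i, v j⟫_ℝ)).det)

/-- `z` is a best approximation vector for the linear form `L_α : x ↦ ⟪α, x⟫`. -/
def IsBestApprox (d : ℕ) (α : E d) (z : Fin d → ℤ) : Prop :=
  pr d (toE d z) ≠ 0 ∧
  ∀ z' : Fin d → ℤ, pr d (toE d z') ≠ 0 →
    (‖pr d (toE d z')‖ ≤ ‖pr d (toE d z)‖ → |⟪α, toE d z⟫_ℝ| ≤ |⟪α, toE d z'⟫_ℝ|) ∧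
    (‖pr d (toE d z')‖ < ‖pr d (toE d z)‖ → |⟪α, toE d z⟫_ℝ| < |⟪α, toE d z'⟫_ℝ|)

/-- `det Λ̲_{k,l}` for a sequence of integer vectors: the `l`-dimensional volume of the
parallelepiped spanned by `z̲_k, …, z̲_{k+l-1}`. -/
def detL (d : ℕ) (z : ℕ → Fin d → ℤ) (k l : ℕ) : ℝ :=
  gramVol (fun i : Fin l => pr d (toE d (z (k + i.1))))

/-- `D_{k,l} = det Λ̲_{k,l} / |z̲_k|^l`. -/
def Dq (d : ℕ) (z : ℕ → Fin d → ℤ) (k l : ℕ) : ℝ :=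
  detL d z k l / ‖pr d (toE d (z k))‖ ^ l

/-- `B_k = |z̲_{k+1}| / |z̲_k|`. -/
def Bq (d : ℕ) (z : ℕ → Fin d → ℤ) (k : ℕ) : ℝ :=
  ‖pr d (toE d (z (k + 1)))‖ / ‖pr d (toE d (z k))‖

/-- `R_k = 1 / (2 |z̲_{k+1}| det Λ̲_{k,d-1})`. -/
def Rq (d : ℕ) (z : ℕ → Fin d → ℤ) (k : ℕ) : ℝ :=
  1 / (2 * ‖pr d (toE d (z (k + 1)))‖ * detL d z k (d - 1))

/-- `v 0, …, v (d-1)` form a basis of the lattice `ℤ^d`. -/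
def IsZBasis (d : ℕ) (v : Fin d → Fin d → ℤ) : Prop :=
  IsUnit ((Matrix.of (fun i j : Fin d => v j i)).det)

/-!
Write `w = ∑ cᵢ zᵢ`. The hypotheses on `det Λ̲_{1,n}` say that for `3 ≤ n ≤ d - 1` the vector
`z̲ₙ` lies at distance more than `|z̲₂|` from the span of `z̲₁, …, z̲ₙ₋₁`, while an integer
combination with nonzero top coefficient is at least as long as that distance; hence
`w = a z₁ + b z₂`. Since `z̲₁, z̲₂` make an obtuse angle and `|w̲| ≤ |z̲₂|`, `w ≠ ±z₂` forces
`ab > 0`. Unimodularity of the basis gives `|L_{α₂}(z₁)| = 1 / det Λ̲_{2,d-1}`, and `α - α₂` is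
horizontal, so `|L_{α-α₂}(z₁)| ≤ R₂ |z̲₁|`. As `a L_{α₂}(z₁)` and `b L_α(z₂)` have the same sign,
`|L_α(w)| ≥ 1 / det Λ̲_{2,d-1} - R₂ |z̲₁|`. Finally `|w̲|` is at least the distance
`det Λ̲_{1,2} / |z̲₁|` from `z̲₂` to `ℝ z̲₁`, and the constant of the statement equals
`(det Λ̲_{1,2} / |z̲₁|)^(d-1) (1 / det Λ̲_{2,d-1} - R₂ |z̲₁|)`.
-/

open Submodule (span)
open scoped Matrix

@[simp] lemma toE_zero (d : ℕ) : toE d 0 = 0 := by ext; simp [toE]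

@[simp] lemma toE_add (d : ℕ) (v w : Fin d → ℤ) : toE d (v + w) = toE d v + toE d w := by
  ext; simp [toE]

@[simp] lemma toE_zsmul (d : ℕ) (c : ℤ) (v : Fin d → ℤ) :
    toE d (c • v) = (c : ℝ) • toE d v := by
  ext; simp [toE]

@[simp] lemma pr_zero (d : ℕ) : pr d 0 = 0 := rfl

@[simp] lemma pr_add (d : ℕ) (x y : E d) : pr d (x + y) = pr d x + pr d y := rfl

@[simp] lemma pr_smul (d : ℕ) (c : ℝ) (x : E d) : pr d (c • x) = c • pr d x := rfl

lemma pr_toE_sum (d : ℕ) {ι : Type*} (s : Finset ι) (c : ι → ℤ) (v : ι → Fin d → ℤ) :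
    pr d (toE d (∑ i ∈ s, c i • v i)) = ∑ i ∈ s, (c i : ℝ) • pr d (toE d (v i)) := by
  induction s using Finset.cons_induction with
  | empty => simp
  | cons i s hi ih =>
    rw [Finset.sum_cons, Finset.sum_cons, toE_add, pr_add, toE_zsmul, pr_smul, ih]

lemma inner_eq_inner_pr_add {m : ℕ} (x y : E (m + 1)) :
    ⟪x, y⟫_ℝ = ⟪pr (m + 1) x, pr (m + 1) y⟫_ℝ + x (Fin.last m) * y (Fin.last m) := by
  simp only [PiLp.inner_apply, RCLike.inner_apply, conj_trivial, Fin.sum_univ_castSucc]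
  congr 1
  ring

lemma abs_inner_le_norm_mul_norm_pr {m : ℕ} {x : E (m + 1)} (hx : x (Fin.last m) = 0)
    (y : E (m + 1)) : |⟪x, y⟫_ℝ| ≤ ‖x‖ * ‖pr (m + 1) y‖ := by
  have hxx := inner_eq_inner_pr_add x x
  rw [hx, zero_mul, add_zero, real_inner_self_eq_norm_sq, real_inner_self_eq_norm_sq,
    sq_eq_sq₀ (norm_nonneg _) (norm_nonneg _)] at hxx
  rw [inner_eq_inner_pr_add, hx, zero_mul, add_zero, hxx]
  exact abs_real_inner_le_norm _ _

section GramVolume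

variable {n m : ℕ}

def colMat (v : Fin m → E n) : Matrix (Fin n) (Fin m) ℝ := Matrix.of fun i j => v j i

lemma gramVol_nonneg (v : Fin m → E n) : 0 ≤ gramVol v := Real.sqrt_nonneg _

lemma gramVol_eq_sqrt_det (v : Fin m → E n) :
    gramVol v = √((colMat v)ᵀ * colMat v).det := by
  have := Matrix.gram_eq_conjTranspose_mul (𝕜 := ℝ) (EuclideanSpace.basisFun (Fin n) ℝ) v
  simp only [EuclideanSpace.basisFun_repr, Matrix.conjTranspose_eq_transpose_of_trivial] at this
  exact congrArg (fun M => √M.det) this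

lemma gramVol_eq_abs_det (v : Fin m → E m) : gramVol v = |(colMat v).det| := by
  rw [gramVol_eq_sqrt_det, Matrix.det_mul, Matrix.det_transpose, ← sq, Real.sqrt_sq_eq_abs]

lemma gramVol_one (v : Fin 1 → E n) : gramVol v = ‖v 0‖ := by
  rw [gramVol, Matrix.det_unique, Matrix.of_apply, real_inner_self_eq_norm_sq,
    Real.sqrt_sq (norm_nonneg _)]
  rfl

lemma gramVol_linearCombination (A : Matrix (Fin m) (Fin m) ℝ) (v : Fin m → E n) :
    gramVol (fun i => ∑ j, A i j • v j) = |A.det| * gramVol v := by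
  have hcol : colMat (fun i => ∑ j, A i j • v j) = colMat v * Aᵀ := by
    ext i j
    simp [colMat, Matrix.mul_apply, mul_comm]
  rw [gramVol_eq_sqrt_det, gramVol_eq_sqrt_det, hcol, Matrix.transpose_mul,
    Matrix.transpose_transpose, Matrix.mul_assoc, Matrix.det_mul, ← Matrix.mul_assoc,
    Matrix.det_mul, Matrix.det_transpose, mul_comm, mul_assoc, ← sq,
    Real.sqrt_mul' _ (sq_nonneg _), Real.sqrt_sq_eq_abs, mul_comm]

lemma gramVol_snoc_of_orthogonal (v : Fin m → E n) {q : E n} (h : ∀ i, ⟪v i, q⟫_ℝ = 0) :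
    gramVol (Fin.snoc v q : Fin (m + 1) → E n) = gramVol v * ‖q‖ := by
  have h' : ∀ i, ⟪q, v i⟫_ℝ = 0 := fun i => by rw [real_inner_comm]; exact h i
  unfold gramVol
  rw [Matrix.det_succ_row _ (Fin.last m), Finset.sum_eq_single (Fin.last m)]
  · have hsub : (Matrix.of fun i j : Fin (m + 1) =>
        ⟪(Fin.snoc v q : Fin (m + 1) → E n) i, (Fin.snoc v q : Fin (m + 1) → E n) j⟫_ℝ).submatrix
        (Fin.last m).succAbove (Fin.last m).succAbove = Matrix.of fun i j => ⟪v i, v j⟫_ℝ := by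
      ext i j
      simp [Fin.succAbove_last, Fin.snoc_castSucc]
    rw [hsub, Matrix.of_apply, Fin.snoc_last, Fin.val_last, Even.neg_one_pow ⟨m, rfl⟩, one_mul,
      real_inner_self_eq_norm_sq, mul_comm, Real.sqrt_mul' _ (sq_nonneg _),
      Real.sqrt_sq (norm_nonneg q)]
  · intro j _ hj
    obtain ⟨j, rfl⟩ := Fin.exists_castSucc_eq.2 hj
    simp [h']
  · simp

lemma gramVol_snoc_sub_of_mem_span (v : Fin m → E n) (x : E n) {p : E n}
    (hp : p ∈ span ℝ (Set.range v)) :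
    gramVol (Fin.snoc v (x - p) : Fin (m + 1) → E n) =
      gramVol (Fin.snoc v x : Fin (m + 1) → E n) := by
  obtain ⟨a, rfl⟩ := (Submodule.mem_span_range_iff_exists_fun ℝ).mp hp
  set r : Fin (m + 1) → ℝ := Fin.snoc (-a) 1
  set A := (1 : Matrix (Fin (m + 1)) (Fin (m + 1)) ℝ).updateRow (Fin.last m) r
  have hdet : A.det = 1 := by
    have hr : ∑ k, r k • (1 : Matrix (Fin (m + 1)) (Fin (m + 1)) ℝ) k = r := by
      ext j
      simp [Matrix.one_apply]
    have := Matrix.det_updateRow_sum (1 : Matrix (Fin (m + 1)) (Fin (m + 1)) ℝ) (Fin.last m) r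
    rw [hr] at this
    simpa [r] using this
  have hA : (Fin.snoc v (x - ∑ i, a i • v i) : Fin (m + 1) → E n) =
      fun i => ∑ j, A i j • (Fin.snoc v x : Fin (m + 1) → E n) j := by
    funext i
    refine Fin.lastCases ?_ (fun i => ?_) i
    · simp [A, r, Fin.sum_univ_castSucc, sub_eq_neg_add]
    · simp [A, Matrix.one_apply]
  rw [hA, gramVol_linearCombination, hdet, abs_one, one_mul]

lemma gramVol_snoc (v : Fin m → E n) (x : E n) :
    gramVol (Fin.snoc v x : Fin (m + 1) → E n) =
      gramVol v * ‖x - (span ℝ (Set.range v)).starProjection x‖ := by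
  set K := span ℝ (Set.range v)
  rw [← gramVol_snoc_sub_of_mem_span v x (K.starProjection_apply_mem x)]
  refine gramVol_snoc_of_orthogonal v fun i => ?_
  exact (K.mem_orthogonal _).mp (K.sub_starProjection_mem_orthogonal x) (v i)
    (Submodule.subset_span ⟨i, rfl⟩)

end GramVolume

section Height

variable {F : Type*} [NormedAddCommGroup F] [InnerProductSpace ℝ F]

instance (u : ℕ → F) (k : ℕ) :
    (span ℝ (Set.range fun i : Fin k => u i)).HasOrthogonalProjection :=
  have := FiniteDimensional.span_of_finite ℝ (Set.finite_range fun i : Fin k => u i)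
  inferInstance

def orthoHeight (u : ℕ → F) (k : ℕ) : ℝ :=
  ‖u k - (span ℝ (Set.range fun i : Fin k => u i)).starProjection (u k)‖

lemma norm_sub_starProjection_le {K : Submodule ℝ F} [K.HasOrthogonalProjection] {v : F}
    (hv : v ∈ K) (x : F) {c : ℝ} (hc : 1 ≤ |c|) : ‖x - K.starProjection x‖ ≤ ‖v + c • x‖ := by
  have hproj : Kᗮ.starProjection (v + c • x) = c • (x - K.starProjection x) := by
    rw [map_add, map_smul, K.starProjection_orthogonal_apply_eq_zero hv,
      K.starProjection_orthogonal_val, zero_add]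
  calc ‖x - K.starProjection x‖ ≤ |c| * ‖x - K.starProjection x‖ :=
        le_mul_of_one_le_left (norm_nonneg _) hc
    _ = ‖Kᗮ.starProjection (v + c • x)‖ := by rw [hproj, norm_smul, Real.norm_eq_abs]
    _ ≤ ‖v + c • x‖ := Kᗮ.norm_starProjection_apply_le _

lemma sum_range_mem_span (u : ℕ → F) (c : ℕ → ℝ) (k : ℕ) :
    ∑ i ∈ Finset.range k, c i • u i ∈ span ℝ (Set.range fun i : Fin k => u i) :=
  Submodule.sum_mem _ fun i hi =>
    Submodule.smul_mem _ _ (Submodule.subset_span ⟨⟨i, Finset.mem_range.mp hi⟩, rfl⟩)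

lemma orthoHeight_le_norm_sum (u : ℕ → F) (c : ℕ → ℤ) {k : ℕ} (hc : c k ≠ 0) :
    orthoHeight u k ≤ ‖∑ i ∈ Finset.range (k + 1), (c i : ℝ) • u i‖ := by
  rw [Finset.sum_range_succ]
  refine norm_sub_starProjection_le (sum_range_mem_span u _ k) (u k) ?_
  exact_mod_cast Int.one_le_abs hc

lemma coeff_eq_zero_of_norm_lt_orthoHeight (u : ℕ → F) (c : ℕ → ℤ) (k₀ : ℕ) {w : F} :
    ∀ N, w = ∑ i ∈ Finset.range N, (c i : ℝ) • u i →
      (∀ k, k₀ ≤ k → k < N → ‖w‖ < orthoHeight u k) → ∀ k, k₀ ≤ k → k < N → c k = 0 := by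
  intro N
  induction N with
  | zero => intro _ _ k _ hk; omega
  | succ N ih =>
    intro hw hlt k hk₀ hkN
    have hcN : c N = 0 := by
      by_contra hne
      have := orthoHeight_le_norm_sum u c hne
      rw [← hw] at this
      exact (hlt N (by omega) N.lt_succ_self).not_ge this
    rcases Nat.lt_succ_iff_lt_or_eq.mp hkN with hk | rfl
    · refine ih ?_ (fun k hk₀ hk => hlt k hk₀ (by omega)) k hk₀ hk
      rw [hw, Finset.sum_range_succ, hcN, Int.cast_zero, zero_smul, add_zero]
    · exact hcN

end Height

section HeightOfGramVolume

variable {n : ℕ} (u : ℕ → E n)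

lemma gramVol_succ (k : ℕ) :
    gramVol (fun i : Fin (k + 1) => u i) = gramVol (fun i : Fin k => u i) * orthoHeight u k := by
  have : (fun i : Fin (k + 1) => u i) = Fin.snoc (fun i : Fin k => u i) (u k) := by
    funext i
    refine Fin.lastCases ?_ (fun i => ?_) i <;> simp
  rw [this, gramVol_snoc]
  rfl

lemma lt_orthoHeight_of_mul_gramVol_lt {k : ℕ} {r : ℝ}
    (h : r * gramVol (fun i : Fin k => u i) < gramVol (fun i : Fin (k + 1) => u i)) :
    r < orthoHeight u k := by
  rw [gramVol_succ, mul_comm r] at h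
  exact lt_of_mul_lt_mul_left h (gramVol_nonneg _)

lemma gramVol_two_le (a : ℤ) {b : ℤ} (hb : b ≠ 0) :
    gramVol (fun i : Fin 2 => u i) ≤ ‖u 0‖ * ‖(a : ℝ) • u 0 + (b : ℝ) • u 1‖ := by
  have h := orthoHeight_le_norm_sum u (fun i => if i = 0 then a else b) (k := 1) (by simpa)
  simp only [Finset.sum_range_succ, Finset.sum_range_zero, zero_add] at h
  rw [gramVol_succ, gramVol_one]
  exact mul_le_mul_of_nonneg_left (by simpa using h) (norm_nonneg _)

end HeightOfGramVolume

section IntegerCombination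

variable {F : Type*} [NormedAddCommGroup F] [InnerProductSpace ℝ F]

lemma one_le_sq_intCast {a : ℤ} (ha : a ≠ 0) : (1 : ℝ) ≤ (a : ℝ) ^ 2 := by
  rw [one_le_sq_iff_one_le_abs]
  exact_mod_cast Int.one_le_abs ha

lemma norm_lt_norm_zsmul_add_zsmul {x y : F} (hx : x ≠ 0) (hxy : ⟪x, y⟫_ℝ ≤ 0) {a b : ℤ}
    (hab : a * b < 0) : ‖y‖ < ‖(a : ℝ) • x + (b : ℝ) • y‖ := by
  have hab' : (a : ℝ) * b < 0 := by exact_mod_cast hab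
  have ha := one_le_sq_intCast (left_ne_zero_of_mul hab.ne)
  have hb := one_le_sq_intCast (right_ne_zero_of_mul hab.ne)
  have hexp : ‖(a : ℝ) • x + (b : ℝ) • y‖ ^ 2 =
      (a : ℝ) ^ 2 * ‖x‖ ^ 2 + 2 * (a * b) * ⟪x, y⟫_ℝ + (b : ℝ) ^ 2 * ‖y‖ ^ 2 := by
    rw [norm_add_sq_real, norm_smul, norm_smul, real_inner_smul_left, real_inner_smul_right,
      Real.norm_eq_abs, Real.norm_eq_abs, mul_pow, mul_pow, sq_abs, sq_abs]
    ring
  refine lt_of_pow_lt_pow_left₀ 2 (norm_nonneg _) ?_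
  rw [hexp]
  nlinarith [norm_pos_iff.mpr hx, mul_nonneg (neg_nonneg.mpr hab'.le) (neg_nonneg.mpr hxy),
    mul_le_mul_of_nonneg_right ha (sq_nonneg ‖x‖), mul_le_mul_of_nonneg_right hb (sq_nonneg ‖y‖)]

lemma mul_pos_of_norm_zsmul_add_zsmul_le {x y : F} (hx : x ≠ 0) (hy : y ≠ 0)
    (hxy : ⟪x, y⟫_ℝ ≤ 0) {a b : ℤ} (hb : b ≠ 0) (hb1 : a = 0 → |b| ≠ 1)
    (hle : ‖(a : ℝ) • x + (b : ℝ) • y‖ ≤ ‖y‖) : 0 < a * b := by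
  rcases lt_trichotomy (a * b) 0 with hab | hab | hab
  · exact absurd hle (norm_lt_norm_zsmul_add_zsmul hx hxy hab).not_ge
  · have ha : a = 0 := (mul_eq_zero.mp hab).resolve_right hb
    rw [ha, Int.cast_zero, zero_smul, zero_add, norm_smul, Real.norm_eq_abs] at hle
    have : |(b : ℝ)| ≤ 1 := (mul_le_iff_le_one_left (norm_pos_iff.mpr hy)).mp hle
    exact absurd (le_antisymm (by exact_mod_cast this) (Int.one_le_abs hb)) (hb1 ha)
  · exact hab

end IntegerCombination

lemma abs_sub_abs_le_abs_add_add {a b : ℤ} (hab : 0 < a * b) {A s δ : ℝ} (hsA : 0 ≤ s * A)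
    (hδ : |δ| ≤ |A|) : |A| - |δ| ≤ |a * A + b * s + a * δ| := by
  have ha : (1 : ℝ) ≤ |(a : ℝ)| := by exact_mod_cast Int.one_le_abs (left_ne_zero_of_mul hab.ne')
  have hsame : |a * A| ≤ |a * A + b * s| := by
    have : (0 : ℝ) ≤ (a * b : ℤ) * (s * A) := mul_nonneg (by exact_mod_cast hab.le) hsA
    push_cast at this
    rw [← sq_le_sq]
    nlinarith
  calc |A| - |δ| ≤ |(a : ℝ)| * (|A| - |δ|) := le_mul_of_one_le_left (sub_nonneg.mpr hδ) ha
    _ = |a * A| - |a * δ| := by rw [abs_mul, abs_mul]; ring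
    _ ≤ |a * A + b * s| - |-(a * δ)| := by rw [abs_neg]; linarith
    _ ≤ |a * A + b * s + a * δ| := by
      have := abs_sub_abs_le_abs_sub (a * A + b * s) (-(a * δ))
      rwa [sub_neg_eq_add] at this

lemma abs_inner_mul_gramVol_eq_abs_det {m : ℕ} (v : Fin (m + 1) → E (m + 1)) {α : E (m + 1)}
    (hα : α (Fin.last m) = 1) (hperp : ∀ j : Fin m, ⟪α, v j.succ⟫_ℝ = 0) :
    |⟪α, v 0⟫_ℝ| * gramVol (fun j : Fin m => pr (m + 1) (v j.succ)) = |(colMat v).det| := by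
  set M := colMat v
  -- Adding `α k` times row `k` to the last row (`α (Fin.last m) = 1`) turns it into
  -- `(⟪α, v j⟫)ⱼ = (⟪α, v 0⟫, 0, …, 0)`; then expand along that row.
  have hrow : ∑ k, α k • M k = fun j => ⟪α, v j⟫_ℝ := by
    ext j
    simp [M, colMat, PiLp.inner_apply, mul_comm]
  have hdet : (M.updateRow (Fin.last m) (fun j => ⟪α, v j⟫_ℝ)).det = M.det := by
    rw [← hrow, Matrix.det_updateRow_sum, hα, one_smul]
  rw [← hdet, Matrix.det_succ_row _ (Fin.last m), Finset.sum_eq_single 0]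
  · have hsub : (M.updateRow (Fin.last m) (fun j => ⟪α, v j⟫_ℝ)).submatrix
        (Fin.last m).succAbove (0 : Fin (m + 1)).succAbove =
        colMat (fun j : Fin m => pr (m + 1) (v j.succ)) := by
      ext i j
      simp [M, colMat, Fin.succAbove_last]
      rfl
    rw [hsub, gramVol_eq_abs_det]
    simp [abs_mul]
  · intro j _ hj
    obtain ⟨j, rfl⟩ := Fin.exists_succ_eq.2 hj
    simp [hperp]
  · simp

lemma IsZBasis.abs_det_colMat {d : ℕ} {v : Fin d → Fin d → ℤ} (hv : IsZBasis d v) :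
    |(colMat fun j => toE d (v j)).det| = 1 := by
  have hcast : (colMat fun j => toE d (v j)) =
      (Matrix.of fun i j : Fin d => v j i).map (Int.castRingHom ℝ) := by
    ext i j
    rfl
  rw [hcast, ← RingHom.mapMatrix_apply, ← RingHom.map_det]
  rcases Int.isUnit_iff.mp hv with h | h <;> simp [h]

lemma exists_eq_zsmul_add_zsmul {d : ℕ} (hd : 3 ≤ d) (z : ℕ → Fin d → ℤ)
    (hdets : ∀ n, 3 ≤ n → n ≤ d - 1 →
      ‖pr d (toE d (z 2))‖ * detL d z 1 (n - 1) < detL d z 1 n)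
    {w : Fin d → ℤ} (hwmem : ∃ c : Fin (d - 1) → ℤ, w = ∑ i, c i • z (i.1 + 1))
    (hwle : ‖pr d (toE d w)‖ ≤ ‖pr d (toE d (z 2))‖) :
    ∃ a b : ℤ, w = a • z 1 + b • z 2 := by
  obtain ⟨c, rfl⟩ := hwmem
  set c' : ℕ → ℤ := fun k => if h : k < d - 1 then c ⟨k, h⟩ else 0
  have hsum : ∑ i, c i • z (i.1 + 1) = ∑ i ∈ Finset.range (d - 1), c' i • z (1 + i) := by
    rw [← Fin.sum_univ_eq_sum_range]
    simp [c', add_comm]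
  have hc := coeff_eq_zero_of_norm_lt_orthoHeight (fun k => pr d (toE d (z (1 + k)))) c' 2
    (d - 1) (by rw [hsum, pr_toE_sum]) fun k hk hkd => hwle.trans_lt <|
      lt_orthoHeight_of_mul_gramVol_lt _ (by simpa using hdets (k + 1) (by omega) (by omega) :
        ‖pr d (toE d (z 2))‖ * detL d z 1 k < detL d z 1 (k + 1))
  refine ⟨c' 0, c' 1, ?_⟩
  rw [hsum, ← Finset.sum_range_add_sum_Ico _ (by omega : 2 ≤ d - 1),
    Finset.sum_eq_zero (s := Finset.Ico 2 (d - 1)) fun k hk => ?_, add_zero]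
  · simp only [Finset.sum_range_succ, Finset.sum_range_zero, zero_add]
  · obtain ⟨hk2, hkd⟩ := Finset.mem_Ico.mp hk
    rw [hc k hk2 hkd, zero_smul]

lemma detL_div_norm_le {d : ℕ} (z : ℕ → Fin d → ℤ) (hz1 : pr d (toE d (z 1)) ≠ 0) (a : ℤ)
    {b : ℤ} (hb : b ≠ 0) :
    detL d z 1 2 / ‖pr d (toE d (z 1))‖ ≤ ‖pr d (toE d (a • z 1 + b • z 2))‖ := by
  rw [div_le_iff₀' (norm_pos_iff.mpr hz1), toE_add, toE_zsmul, toE_zsmul, pr_add, pr_smul,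
    pr_smul]
  exact gramVol_two_le (fun k => pr d (toE d (z (1 + k)))) a hb

lemma abs_inner_mul_detL_eq_one {m : ℕ} {z : ℕ → Fin (m + 1) → ℤ}
    (hbasis : IsZBasis (m + 1) (fun j => z (j.1 + 1))) {α : E (m + 1)}
    (hα : α (Fin.last m) = 1) (hperp : ∀ i : Fin m, ⟪α, toE (m + 1) (z (i.1 + 2))⟫_ℝ = 0) :
    |⟪α, toE (m + 1) (z 1)⟫_ℝ| * detL (m + 1) z 2 m = 1 := by
  rw [← hbasis.abs_det_colMat, ← abs_inner_mul_gramVol_eq_abs_det _ hα hperp]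
  simp only [detL, Fin.val_succ, Fin.val_zero, zero_add, add_assoc, one_add_one_eq_two,
    add_comm 2]

lemma Rq_mul_le_one_div {d : ℕ} (z : ℕ → Fin d → ℤ)
    (h13 : ‖pr d (toE d (z 1))‖ ≤ ‖pr d (toE d (z 3))‖) :
    Rq d z 2 * ‖pr d (toE d (z 1))‖ ≤ 1 / detL d z 2 (d - 1) := by
  have hinv : 0 ≤ 1 / detL d z 2 (d - 1) := one_div_nonneg.mpr (gramVol_nonneg _)
  calc Rq d z 2 * ‖pr d (toE d (z 1))‖
      = ‖pr d (toE d (z 1))‖ / (2 * ‖pr d (toE d (z 3))‖) * (1 / detL d z 2 (d - 1)) := by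
        simp only [Rq, show (2 + 1 : ℕ) = 3 from rfl]
        ring
    _ ≤ 1 * (1 / detL d z 2 (d - 1)) := by
        gcongr
        exact div_le_one_of_le₀ (by linarith [norm_nonneg (pr d (toE d (z 1)))]) (by positivity)
    _ = 1 / detL d z 2 (d - 1) := one_mul _

lemma one_div_detL_sub_le_abs_inner {m : ℕ} {z : ℕ → Fin (m + 1) → ℤ}
    (h13 : ‖pr (m + 1) (toE (m + 1) (z 1))‖ ≤ ‖pr (m + 1) (toE (m + 1) (z 3))‖)
    {α α' : E (m + 1)} (hlast : α (Fin.last m) = α' (Fin.last m))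
    (hαα' : ‖α - α'‖ ≤ Rq (m + 1) z 2)
    (hsign : 0 ≤ ⟪α, toE (m + 1) (z 2)⟫_ℝ * ⟪α', toE (m + 1) (z 1)⟫_ℝ)
    (hα' : |⟪α', toE (m + 1) (z 1)⟫_ℝ| = 1 / detL (m + 1) z 2 m) {a b : ℤ} (hab : 0 < a * b) :
    1 / detL (m + 1) z 2 m - Rq (m + 1) z 2 * ‖pr (m + 1) (toE (m + 1) (z 1))‖ ≤
      |⟪α, toE (m + 1) (a • z 1 + b • z 2)⟫_ℝ| := by
  have hδ : |⟪α - α', toE (m + 1) (z 1)⟫_ℝ| ≤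
      Rq (m + 1) z 2 * ‖pr (m + 1) (toE (m + 1) (z 1))‖ :=
    (abs_inner_le_norm_mul_norm_pr (sub_eq_zero.mpr hlast) _).trans
      (mul_le_mul_of_nonneg_right hαα' (norm_nonneg _))
  have key := abs_sub_abs_le_abs_add_add hab hsign
    ((hδ.trans (Rq_mul_le_one_div z h13)).trans hα'.ge)
  have hsplit : ⟪α, toE (m + 1) (a • z 1 + b • z 2)⟫_ℝ = a * ⟪α', toE (m + 1) (z 1)⟫_ℝ +
      b * ⟪α, toE (m + 1) (z 2)⟫_ℝ + a * ⟪α - α', toE (m + 1) (z 1)⟫_ℝ := by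
    rw [toE_add, toE_zsmul, toE_zsmul, inner_add_right, real_inner_smul_right,
      real_inner_smul_right, inner_sub_left]
    ring
  rw [hα'] at key
  rw [hsplit]
  linarith

lemma Dq_Bq_bound_eq_detL {d : ℕ} (z : ℕ → Fin d → ℤ) (h1 : pr d (toE d (z 1)) ≠ 0)
    (h2 : pr d (toE d (z 2)) ≠ 0) (h3 : pr d (toE d (z 3)) ≠ 0)
    (hΔ : detL d z 2 (d - 1) ≠ 0) :
    Dq d z 1 2 ^ (d - 1) / (Dq d z 2 (d - 1) * Bq d z 1 ^ (d - 1)) *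
        (1 - 1 / (2 * Bq d z 1 * Bq d z 2)) =
      (detL d z 1 2 / ‖pr d (toE d (z 1))‖) ^ (d - 1) *
        (1 / detL d z 2 (d - 1) - Rq d z 2 * ‖pr d (toE d (z 1))‖) := by
  have := norm_ne_zero_iff.mpr h1
  have := norm_ne_zero_iff.mpr h2
  have := norm_ne_zero_iff.mpr h3
  simp only [Dq, Bq, Rq, show (1 + 1 : ℕ) = 2 from rfl, show (2 + 1 : ℕ) = 3 from rfl]
  field_simp
  ring

theorem stmt10 (d : ℕ) (hd : 3 ≤ d) (z : ℕ → Fin d → ℤ)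
    (hbasis : IsZBasis d (fun j => z (j.1 + 1)))
    (hz1 : pr d (toE d (z 1)) ≠ 0)
    (h12 : ‖pr d (toE d (z 1))‖ ≤ ‖pr d (toE d (z 2))‖)
    (h23 : ‖pr d (toE d (z 2))‖ ≤ ‖pr d (toE d (z 3))‖)
    (hneg : ⟪pr d (toE d (z 1)), pr d (toE d (z 2))⟫_ℝ ≤ 0)
    (hdets : ∀ n, 3 ≤ n → n ≤ d - 1 →
      ‖pr d (toE d (z 2))‖ * detL d z 1 (n - 1) < detL d z 1 n)
    (α2 : E d) (hα2pi : α2 ⟨d - 1, by omega⟩ = 1)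
    (hα2perp : ∀ i : Fin (d - 1), ⟪α2, toE d (z (i.1 + 2))⟫_ℝ = 0)
    (α : E d) (hαpi : α ⟨d - 1, by omega⟩ = 1) (hαS : ‖α - α2‖ ≤ Rq d z 2)
    (hsign : 0 ≤ ⟪α, toE d (z 2)⟫_ℝ * ⟪α2, toE d (z 1)⟫_ℝ)
    (w : Fin d → ℤ)
    (hwmem : ∃ c : Fin (d - 1) → ℤ, w = ∑ i, c i • z (i.1 + 1))
    (hwle : ‖pr d (toE d w)‖ ≤ ‖pr d (toE d (z 2))‖)
    (hwz2 : w ≠ z 2) (hwz2' : w ≠ -z 2)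
    (hwmul : ∀ m : ℤ, w ≠ m • z 1) :
    Dq d z 1 2 ^ (d - 1) / (Dq d z 2 (d - 1) * Bq d z 1 ^ (d - 1)) *
        (1 - 1 / (2 * Bq d z 1 * Bq d z 2)) ≤
      |⟪α, toE d w⟫_ℝ| * ‖pr d (toE d w)‖ ^ (d - 1) := by
  have hz1pos : 0 < ‖pr d (toE d (z 1))‖ := norm_pos_iff.mpr hz1
  have hz2 : pr d (toE d (z 2)) ≠ 0 := norm_pos_iff.mp (hz1pos.trans_le h12)
  have hz3 : pr d (toE d (z 3)) ≠ 0 := norm_pos_iff.mp (hz1pos.trans_le (h12.trans h23))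
  obtain ⟨a, b, rfl⟩ := exists_eq_zsmul_add_zsmul hd z hdets hwmem hwle
  have hb : b ≠ 0 := fun hb => hwmul a (by rw [hb, zero_smul, add_zero])
  have hab : 0 < a * b := by
    refine mul_pos_of_norm_zsmul_add_zsmul_le hz1 hz2 hneg hb (fun ha hb1 => ?_)
      (by rwa [toE_add, toE_zsmul, toE_zsmul, pr_add, pr_smul, pr_smul] at hwle)
    rcases abs_eq (zero_le_one' ℤ) |>.mp hb1 with rfl | rfl
    · exact hwz2 (by simp [ha])
    · exact hwz2' (by simp [ha])
  obtain ⟨m, rfl⟩ : ∃ m, d = m + 1 := ⟨d - 1, by omega⟩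
  have hΔ := abs_inner_mul_detL_eq_one hbasis hα2pi hα2perp
  refine (Dq_Bq_bound_eq_detL z hz1 hz2 hz3 (right_ne_zero_of_mul_eq_one hΔ)).trans_le ?_
  rw [mul_comm |_|]
  exact mul_le_mul
    (pow_le_pow_left₀ (div_nonneg (gramVol_nonneg _) hz1pos.le) (detL_div_norm_le z hz1 a hb) _)
    (one_div_detL_sub_le_abs_inner (h12.trans h23) (hαpi.trans hα2pi.symm) hαS hsign
      (eq_one_div_of_mul_eq_one_left hΔ) hab)
    (sub_nonneg.mpr (Rq_mul_le_one_div z (h12.trans h23))) (by positivity)
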